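/- arXiv:1708.03430 — 5 statements merged into one kernel-verified Lean document; each statement's English description precedes it below -/
import Mathlib

section
/- (Proposition 2: the generalized Clifford torus is helicoidal in the sphere.) Let p ≥ 1, and let Σ = {(x,y) ∈ ℝ^{p+1} × ℝ^{p+1} : ‖x‖ = ‖y‖ = 1/√2}, D₁ = {(x,y) ∈ S^{2p+1} : ‖x‖ < 1/√2}, D₂ = {(x,y) ∈ S^{2p+1} : ‖x‖ > 1/√2}. Then for every point q ∈ Σ there exists an orthogonal transformation A ∈ O(2p+2) such that A q = q, A(Σ) = Σ, A(D₁) = D₂, and A(D₂) = D₁. -/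
/-!
Write `q = (x, y)`. Since `‖x‖ = ‖y‖`, the reflection `B` of `ℝ^{p+1}` in the hyperplane
orthogonal to `x - y` swaps `x` and `y`, so the orthogonal involution `A (u, v) = (B v, B u)`
fixes `q` and exchanges the norms of the two factors. Hence `A` preserves `Σ`; and on the unit
sphere, where `‖u‖² + ‖v‖² = 1`, `‖v‖ < 1/√2` iff `‖u‖ > 1/√2`, so `A` maps `D₁` onto `D₂`,
and, being an involution, `D₂` onto `D₁`.
-/

noncomputable section

/-- `ℝ^{p+1}` as a Euclidean space. -/
abbrev E (p : ℕ) := EuclideanSpace ℝ (Fin (p + 1))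

/-- `ℝ^{2p+2}` identified with `ℝ^{p+1} × ℝ^{p+1}`, with the Euclidean (`L²`) norm. -/
abbrev EE (p : ℕ) := WithLp 2 (E p × E p)

/-- The first factor `x` of a point `(x, y) ∈ ℝ^{p+1} × ℝ^{p+1}`. -/
def fstE {p : ℕ} (v : EE p) : E p := (WithLp.equiv 2 (E p × E p) v).1

/-- The second factor `y` of a point `(x, y) ∈ ℝ^{p+1} × ℝ^{p+1}`. -/
def sndE {p : ℕ} (v : EE p) : E p := (WithLp.equiv 2 (E p × E p) v).2

/-- The generalized Clifford torus `Σ = {(x,y) : ‖x‖ = ‖y‖ = 1/√2} ⊆ S^{2p+1}`. -/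
def cliffordTorus (p : ℕ) : Set (EE p) :=
  {v | ‖fstE v‖ = (Real.sqrt 2)⁻¹ ∧ ‖sndE v‖ = (Real.sqrt 2)⁻¹}

/-- The domain `D₁ = {(x,y) ∈ S^{2p+1} : ‖x‖ < 1/√2}`. -/
def domD1 (p : ℕ) : Set (EE p) := {v | ‖v‖ = 1 ∧ ‖fstE v‖ < (Real.sqrt 2)⁻¹}

/-- The domain `D₂ = {(x,y) ∈ S^{2p+1} : ‖x‖ > 1/√2}`. -/
def domD2 (p : ℕ) : Set (EE p) := {v | ‖v‖ = 1 ∧ (Real.sqrt 2)⁻¹ < ‖fstE v‖}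

section SwapProduct

variable {F : Type*} [SeminormedAddCommGroup F] [Module ℝ F]

def swapProdCongr (B : F ≃ₗᵢ[ℝ] F) : WithLp 2 (F × F) ≃ₗᵢ[ℝ] WithLp 2 (F × F) :=
  (LinearIsometryEquiv.withLpProdComm 2 ℝ F F).trans (LinearIsometryEquiv.withLpProdCongr 2 B B)

theorem swapProdCongr_involutive {B : F ≃ₗᵢ[ℝ] F} (hB : Function.Involutive B) :
    Function.Involutive (swapProdCongr B) := fun v =>
  WithLp.ofLp_injective 2 (Prod.ext (hB v.fst) (hB v.snd))

end SwapProduct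

theorem Submodule.exists_involutive_swap {F : Type*} [NormedAddCommGroup F]
    [InnerProductSpace ℝ F] {x y : F} (h : ‖x‖ = ‖y‖) :
    ∃ B : F ≃ₗᵢ[ℝ] F, Function.Involutive B ∧ B x = y ∧ B y = x := by
  refine ⟨reflection (ℝ ∙ (x - y))ᗮ, reflection_involutive _, reflection_sub h, ?_⟩
  simpa only [reflection_sub h] using reflection_reflection (ℝ ∙ (x - y))ᗮ x

theorem lt_inv_sqrt_two_iff_of_sq_add_sq {a b : ℝ} (ha : 0 ≤ a) (hb : 0 ≤ b)
    (h : a ^ 2 + b ^ 2 = 1) : b < (√2)⁻¹ ↔ (√2)⁻¹ < a := by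
  have hc : 0 ≤ (√2)⁻¹ := by positivity
  have hc2 : ((√2)⁻¹) ^ 2 = 1 / 2 := by
    rw [inv_pow, Real.sq_sqrt zero_le_two, one_div]
  rw [← pow_lt_pow_iff_left₀ hb hc two_ne_zero, ← pow_lt_pow_iff_left₀ hc ha two_ne_zero, hc2]
  constructor <;> intro <;> linarith

theorem WithLp.norm_snd_lt_inv_sqrt_two_iff {F G : Type*} [SeminormedAddCommGroup F]
    [SeminormedAddCommGroup G] {v : WithLp 2 (F × G)} (hv : ‖v‖ = 1) :
    ‖v.snd‖ < (√2)⁻¹ ↔ (√2)⁻¹ < ‖v.fst‖ := by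
  refine lt_inv_sqrt_two_iff_of_sq_add_sq (norm_nonneg _) (norm_nonneg _) ?_
  rw [← WithLp.prod_norm_sq_eq_of_L2, hv, one_pow]

section CliffordTorus

variable {p : ℕ} (B : E p ≃ₗᵢ[ℝ] E p) (v : EE p)

theorem swapProdCongr_mem_cliffordTorus_iff :
    swapProdCongr B v ∈ cliffordTorus p ↔ v ∈ cliffordTorus p := by
  change ‖B v.snd‖ = _ ∧ ‖B v.fst‖ = _ ↔ ‖v.fst‖ = _ ∧ ‖v.snd‖ = _
  rw [B.norm_map, B.norm_map, and_comm]

theorem swapProdCongr_mem_domD1_iff :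
    swapProdCongr B v ∈ domD1 p ↔ v ∈ domD2 p := by
  change ‖swapProdCongr B v‖ = 1 ∧ ‖B v.snd‖ < _ ↔ ‖v‖ = 1 ∧ _ < ‖v.fst‖
  rw [LinearIsometryEquiv.norm_map, B.norm_map]
  exact and_congr_right WithLp.norm_snd_lt_inv_sqrt_two_iff

end CliffordTorus

theorem cliffordTorus_helicoidal_general (p : ℕ)
    (q : EE p) (hq : q ∈ cliffordTorus p) :
    ∃ A : EE p ≃ₗᵢ[ℝ] EE p,
      A q = q ∧
      A '' cliffordTorus p = cliffordTorus p ∧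
      A '' domD1 p = domD2 p ∧
      A '' domD2 p = domD1 p := by
  obtain ⟨B, hB, hBx, hBy⟩ := Submodule.exists_involutive_swap (hq.1.trans hq.2.symm)
  have hA := swapProdCongr_involutive hB
  have hD : swapProdCongr B '' domD1 p = domD2 p := by
    rw [hA.image_eq_preimage_symm]
    exact Set.ext (swapProdCongr_mem_domD1_iff B)
  refine ⟨swapProdCongr B, WithLp.ofLp_injective 2 (Prod.ext hBy hBx), ?_, hD, ?_⟩
  · rw [hA.image_eq_preimage_symm]
    exact Set.ext (swapProdCongr_mem_cliffordTorus_iff B)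
  · rw [← hD, ← Set.image_comp, hA.comp_self, Set.image_id]

/-- (Proposition 2) The generalized Clifford torus `Σ` is helicoidal in `S^{2p+1}`:
at every point `q ∈ Σ` there is an orthogonal transformation `A ∈ O(2p+2)` with
`A q = q`, `A(Σ) = Σ`, `A(D₁) = D₂`, and `A(D₂) = D₁`. -/
theorem cliffordTorus_helicoidal (p : ℕ) (hp : 1 ≤ p)
    (q : EE p) (hq : q ∈ cliffordTorus p) :
    ∃ A : EE p ≃ₗᵢ[ℝ] EE p,
      A q = q ∧
      A '' cliffordTorus p = cliffordTorus p ∧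
      A '' domD1 p = domD2 p ∧
      A '' domD2 p = domD1 p :=
  cliffordTorus_helicoidal_general p q hq
end
end

section
/- (Helicoidal property underlying Tkachev's theorem.) Equip the space M_n of n × n real matrices with the Frobenius inner product ⟨X,Y⟩ = tr(XᵀY), and let Σ = {X ∈ M_n : det X = 0}, D₊ = {X ∈ M_n : det X > 0}, D₋ = {X ∈ M_n : det X < 0}. Then for every X ∈ Σ there exists a linear isometry φ of M_n (namely φ(Y) = A·Y for a suitable A ∈ O(n) with det A = −1) such that φ(X) = X, φ(Σ) = Σ, φ(D₊) = D₋, and φ(D₋) = D₊. -/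
/-!
A singular `X` has a nonzero vector `v` in its left kernel, `vᵀ X = 0`. The Householder
reflection `H = 1 - 2 v vᵀ / (vᵀ v)` is an orthogonal involution of determinant `-1` with
`H X = X`; left multiplication by `H` is then a Frobenius isometry that negates the determinant,
so it fixes `Σ` and exchanges `D₊` and `D₋`.
-/

open Matrix

namespace Matrix

section CommRing

variable {R : Type*} [CommRing R] {n : Type*} [Fintype n] [DecidableEq n]

theorem det_one_add_vecMulVec (u v : n → R) : det (1 + vecMulVec u v) = 1 + v ⬝ᵥ u := by
  rw [vecMulVec_eq (Fin 1), det_one_add_replicateCol_mul_replicateRow]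

theorem trace_transpose_mul_mul_of_transpose_mul_eq_one {m : Type*} [Fintype m]
    {A : Matrix n n R} (hA : Aᵀ * A = 1) (Y Z : Matrix n m R) :
    trace ((A * Y)ᵀ * (A * Z)) = trace (Yᵀ * Z) := by
  rw [transpose_mul, Matrix.mul_assoc, ← Matrix.mul_assoc Aᵀ, hA, Matrix.one_mul]

theorem image_mul_left_setOf_det {A : Matrix n n R} (hAA : A * A = 1) (hA : A.det = -1)
    (p : R → Prop) : (A * ·) '' {Y | p Y.det} = {Y | p (-Y.det)} := by
  have hinv : Function.LeftInverse (A * ·) (A * ·) := fun Y => by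
    simp only [← Matrix.mul_assoc, hAA, Matrix.one_mul]
  ext Y
  simp [Set.image_eq_preimage_of_inverse hinv hinv, det_mul, hA]

end CommRing

section Householder

variable {K : Type*} [Field K] {n : Type*} [Fintype n] [DecidableEq n]

def householder (v : n → K) : Matrix n n K :=
  1 - (2 / (v ⬝ᵥ v)) • vecMulVec v v

theorem transpose_householder (v : n → K) : (householder v)ᵀ = householder v := by
  simp [householder]

theorem householder_mul_self {v : n → K} (hv : v ⬝ᵥ v ≠ 0) :
    householder v * householder v = 1 := by
  have hsq : vecMulVec v v * vecMulVec v v = (v ⬝ᵥ v) • vecMulVec v v := by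
    rw [vecMulVec_mul_vecMulVec, vecMulVec_smul]
  simp only [householder, Matrix.sub_mul, Matrix.mul_sub, Matrix.one_mul, Matrix.mul_one,
    smul_mul_smul, hsq, smul_smul]
  have hcoeff :
      2 / (v ⬝ᵥ v) * (2 / (v ⬝ᵥ v)) * (v ⬝ᵥ v) = 2 / (v ⬝ᵥ v) + 2 / (v ⬝ᵥ v) := by
    field_simp
    ring
  rw [hcoeff, add_smul]
  abel

theorem det_householder {v : n → K} (hv : v ⬝ᵥ v ≠ 0) : (householder v).det = -1 := by
  rw [householder, sub_eq_add_neg, ← neg_smul, ← smul_vecMulVec, det_one_add_vecMulVec,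
    dotProduct_smul, smul_eq_mul, dotProduct_comm, neg_mul, div_mul_cancel₀ _ hv]
  ring

theorem householder_mul_of_vecMul_eq_zero {m : Type*} {v : n → K} {X : Matrix n m K}
    (hX : v ᵥ* X = 0) : householder v * X = X := by
  have hPX : vecMulVec v v * X = 0 := by
    rw [vecMulVec_mul, hX]
    exact ext fun _ _ => mul_zero _
  rw [householder, Matrix.sub_mul, Matrix.one_mul, Matrix.smul_mul, hPX, smul_zero, sub_zero]

end Householder

end Matrix

/-- (Helicoidal property underlying Tkachev's theorem.) For every `X` in
`Σ = {det = 0} ⊆ M_n`, there is a linear isometry `φ` of `M_n` with the Frobenius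
inner product `⟨X,Y⟩ = tr(XᵀY)` — namely `φ(Y) = A·Y` for a suitable `A ∈ O(n)`
with `det A = -1` — such that `φ(X) = X`, `φ(Σ) = Σ`, `φ(D₊) = D₋` and `φ(D₋) = D₊`,
where `D₊ = {det > 0}` and `D₋ = {det < 0}`. -/
theorem det_zero_set_helicoidal (n : ℕ) (X : Matrix (Fin n) (Fin n) ℝ) (hX : X.det = 0) :
    ∃ A : Matrix (Fin n) (Fin n) ℝ, Aᵀ * A = 1 ∧ A.det = -1 ∧
      (∀ Y Z : Matrix (Fin n) (Fin n) ℝ,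
        Matrix.trace ((A * Y)ᵀ * (A * Z)) = Matrix.trace (Yᵀ * Z)) ∧
      A * X = X ∧
      (fun Y => A * Y) '' {Y : Matrix (Fin n) (Fin n) ℝ | Y.det = 0} = {Y | Y.det = 0} ∧
      (fun Y => A * Y) '' {Y : Matrix (Fin n) (Fin n) ℝ | 0 < Y.det} = {Y | Y.det < 0} ∧
      (fun Y => A * Y) '' {Y : Matrix (Fin n) (Fin n) ℝ | Y.det < 0} = {Y | 0 < Y.det} := by
  obtain ⟨v, hv0, hv⟩ := exists_vecMul_eq_zero_iff.mpr hX
  have hvv : v ⬝ᵥ v ≠ 0 := dotProduct_self_eq_zero.not.mpr hv0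
  have hHH := householder_mul_self hvv
  have hdet := det_householder hvv
  have horth : (householder v)ᵀ * householder v = 1 := by rw [transpose_householder, hHH]
  refine ⟨householder v, horth, hdet, trace_transpose_mul_mul_of_transpose_mul_eq_one horth,
    householder_mul_of_vecMul_eq_zero hv, ?_, ?_, ?_⟩
  · simpa using image_mul_left_setOf_det hHH hdet (· = 0)
  · simpa using image_mul_left_setOf_det hHH hdet (0 < ·)
  · simpa using image_mul_left_setOf_det hHH hdet (· < 0)
end

section
/- (Vanishing mean curvature of the determinant cone, Hessian form.) For every n × n real matrix X with det X = 0, the Hessian of the determinant function at X annihilates its own gradient direction: D²det(X)(G, G) = 0, where G = (adj X)ᵀ is the transpose of the adjugate (cofactor) matrix of X, which is the gradient of det at X with respect to the Frobenius inner product. Together with the harmonicity of det, this expresses that the level set {det = 0} is a minimal hypercone in ℝ^{n²} at every point where its gradient is nonzero. -/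
/-!
When `det X = 0` the adjugate of `X` has rank at most one, so all rows of `G = (adj X)ᵀ` are
multiples of a single vector. As `det` is alternating in the rows, every term of the multilinear
expansion of `det (Y + t • G)` that uses two rows of `G` vanishes, so `t ↦ det (Y + t • G)` is
affine for every `Y`. A differentiable function that is affine on every line of direction `G`
has first derivative `Y ↦ f (Y + G) - f Y` along `G`, hence zero second derivative along `G`.
-/

open Matrix

attribute [local instance] Matrix.frobeniusNormedAddCommGroup Matrix.frobeniusNormedSpace

namespace AlternatingMap

variable {R M N ι : Type*} [CommRing R] [AddCommGroup M] [Module R M] [AddCommGroup N]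
  [Module R N] [Fintype ι] [DecidableEq ι] (f : M [⋀^ι]→ₗ[R] N)

theorem map_add_smul_const (m : ι → M) (c : ι → R) (v : M) :
    f (m + fun i => c i • v) = f m + ∑ i, c i • f (Function.update m i v) := by
  have hterm (s : Finset ι) : f (s.piecewise (fun i => c i • v) m) =
      (∏ i ∈ s, c i) • f (s.piecewise (fun _ => v) m) := by
    rw [← coe_multilinearMap, ← MultilinearMap.map_piecewise_smul]
    congr 1
    ext1 i
    by_cases hi : i ∈ s <;> simp [hi]
  have hvanish (s : Finset ι) (hs : 1 < s.card) : f (s.piecewise (fun _ => v) m) = 0 := by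
    obtain ⟨i, hi, j, hj, hij⟩ := Finset.one_lt_card.mp hs
    exact f.map_eq_zero_of_eq _ (by simp [hi, hj]) hij
  rw [add_comm m, ← coe_multilinearMap, MultilinearMap.map_add_univ]
  simp only [coe_multilinearMap, hterm]
  rw [← Finset.sum_subset (Finset.subset_univ (insert ∅ (Finset.univ.map ⟨singleton,
    Finset.singleton_injective⟩)))]
  · rw [Finset.sum_insert (by simp), Finset.sum_map]
    simp [Finset.piecewise_singleton]
  · intro s _ hs
    simp only [Finset.mem_insert, Finset.mem_map, Finset.mem_univ, true_and, not_or,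
      not_exists] at hs
    obtain ⟨i, rfl⟩ | hnt :=
      (Finset.nonempty_iff_ne_empty.mpr hs.1).exists_eq_singleton_or_nontrivial
    · exact absurd rfl (hs.2 i)
    · rw [hvanish s (Finset.one_lt_card_iff_nontrivial.mpr hnt), smul_zero]

theorem map_add_smul_smul_const (m : ι → M) (c : ι → R) (v : M) (t : R) :
    f (m + t • fun i => c i • v) = f m + t • (f (m + fun i => c i • v) - f m) := by
  have hscale : (t • fun i => c i • v) = fun i => (t * c i) • v := by
    ext1 i
    simp [mul_smul]
  rw [hscale, map_add_smul_const, map_add_smul_const, add_sub_cancel_left, Finset.smul_sum]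
  simp only [mul_smul]

end AlternatingMap

theorem exists_eq_smul_of_mul_eq_mul {ι κ K : Type*} [Field K] (g : ι → κ → K)
    (h : ∀ i j a b, g i a * g j b = g j a * g i b) :
    ∃ (c : ι → K) (v : κ → K), g = fun i => c i • v := by
  by_cases hzero : ∀ i a, g i a = 0
  · exact ⟨0, 0, funext fun i => funext fun a => by simp [hzero]⟩
  obtain ⟨i₀, a₀, hne⟩ : ∃ i a, g i a ≠ 0 := by simpa using hzero
  refine ⟨fun i => g i a₀ / g i₀ a₀, g i₀, funext fun i => funext fun b => ?_⟩
  simp only [Pi.smul_apply, smul_eq_mul]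
  field_simp
  linear_combination h i₀ i a₀ b

namespace Matrix

variable {n K : Type*} [Fintype n] [DecidableEq n] [Field K]

theorem adjugate_apply_eq_zero_of_mulVec_eq_zero {A : Matrix n n K} {u : n → K} (hu : u ≠ 0)
    (hAu : A *ᵥ u = 0) {p : n} (hup : u p = 0) (q : n) : A.adjugate p q = 0 := by
  rw [adjugate_apply, ← exists_mulVec_eq_zero_iff]
  refine ⟨u, hu, ?_⟩
  rw [updateRow_mulVec, hAu]
  simp [hup]

theorem adjugate_apply_mul_adjugate_apply_of_det_eq_zero {A : Matrix n n K} (hA : A.det = 0)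
    (p r j l : n) : A.adjugate p l * A.adjugate r j = A.adjugate p j * A.adjugate r l := by
  let w := A.adjugate *ᵥ (Pi.single j (A.adjugate p l) - Pi.single l (A.adjugate p j))
  have hw_apply (r : n) :
      w r = A.adjugate p l * A.adjugate r j - A.adjugate p j * A.adjugate r l := by
    simp [w, mulVec_sub, mulVec_single]
  have hAw : A *ᵥ w = 0 := by
    rw [mulVec_mulVec, mul_adjugate, hA, zero_smul, zero_mulVec]
  by_cases hw : w = 0
  · exact sub_eq_zero.mp ((hw_apply r).symm.trans (congrFun hw r))
  · have hrow := adjugate_apply_eq_zero_of_mulVec_eq_zero hw hAw (p := p)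
      (by rw [hw_apply]; ring)
    simp [hrow]

theorem differentiable_det : Differentiable ℝ (det : Matrix n n ℝ → ℝ) := by
  have hentry (i j : n) : Differentiable ℝ fun M : Matrix n n ℝ => M i j :=
    (LinearMap.toContinuousLinearMap (entryLinearMap ℝ ℝ i j)).differentiable
  simp only [funext det_apply]
  fun_prop

end Matrix

section AffineAlong

variable {𝕜 E F : Type*} [NontriviallyNormedField 𝕜] [NormedAddCommGroup E]
  [NormedSpace 𝕜 E] [NormedAddCommGroup F] [NormedSpace 𝕜 F] {f : E → F} {x v : E}

theorem fderiv_apply_eq_sub_of_affine_along (hf : DifferentiableAt 𝕜 f x)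
    (h : ∀ t : 𝕜, f (x + t • v) = f x + t • (f (x + v) - f x)) :
    fderiv 𝕜 f x v = f (x + v) - f x := by
  rw [← hf.lineDeriv_eq_fderiv, lineDeriv, funext h]
  exact ((hasDerivAt_id 0).smul_const _).const_add _ |>.deriv.trans (one_smul _ _)

theorem fderiv_fderiv_apply_eq_zero_of_affine_along (hf : Differentiable 𝕜 f)
    (h : ∀ (y : E) (t : 𝕜), f (y + t • v) = f y + t • (f (y + v) - f y)) (x : E) :
    fderiv 𝕜 (fun y => fderiv 𝕜 f y v) x v = 0 := by
  have hfirst : (fun y => fderiv 𝕜 f y v) = fun y => f (y + v) - f y :=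
    funext fun y => fderiv_apply_eq_sub_of_affine_along (hf y) (h y)
  have hshift : DifferentiableAt 𝕜 (fun y => f (y + v)) x :=
    (hf (x + v)).comp x (differentiableAt_id.add_const v)
  rw [hfirst, fderiv_fun_sub hshift (hf x), fderiv_comp_add_right, _root_.sub_apply,
    fderiv_apply_eq_sub_of_affine_along (hf _) (h _),
    fderiv_apply_eq_sub_of_affine_along (hf x) (h x), add_assoc, ← two_smul 𝕜 v, h]
  module

end AffineAlong

/-- (Vanishing mean curvature of the determinant cone, Hessian form.) For every
`n × n` real matrix `X` with `det X = 0`, the Hessian of `det` at `X` annihilates the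
gradient direction `G = (adj X)ᵀ` of `det` (with respect to the Frobenius inner
product): `D²det(X)(G, G) = 0`. -/
theorem hessian_det_on_gradient_vanishes (n : ℕ) (X : Matrix (Fin n) (Fin n) ℝ)
    (hX : X.det = 0) :
    fderiv ℝ (fun Y : Matrix (Fin n) (Fin n) ℝ =>
        fderiv ℝ (Matrix.det : Matrix (Fin n) (Fin n) ℝ → ℝ) Y (X.adjugate)ᵀ)
      X (X.adjugate)ᵀ = 0 := by
  obtain ⟨c, v, hG⟩ := exists_eq_smul_of_mul_eq_mul (X.adjugate)ᵀ
    fun i j a b => adjugate_apply_mul_adjugate_apply_of_det_eq_zero hX a b j i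
  refine fderiv_fderiv_apply_eq_zero_of_affine_along differentiable_det (fun Y t => ?_) X
  rw [hG]
  exact detRowAlternating.map_add_smul_smul_const Y c v t
end

section
/- The Clifford torus is congruent to the zero-determinant set of 2 × 2 matrices intersected with the 3-sphere: there exists an orthogonal transformation A ∈ O(4) of ℝ⁴ mapping the set {x ∈ S³ : x₁x₄ − x₂x₃ = 0} onto the Clifford torus {x ∈ S³ : x₁² + x₂² = 1/2 and x₃² + x₄² = 1/2}. -/
/-!
The map `x ↦ ((x₁ + x₄)/√2, (x₂ - x₃)/√2, (x₁ - x₄)/√2, (x₂ + x₃)/√2)` is orthogonal, and for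
its image `y` one has `y₁² + y₂² = ‖x‖²/2 + (x₁x₄ - x₂x₃)` and `y₃² + y₄² = ‖x‖²/2 - (x₁x₄ - x₂x₃)`.
On `S³` both sums equal `1/2` exactly when the determinant vanishes.
-/

open Real

noncomputable def cliffordRotation : EuclideanSpace ℝ (Fin 4) →ₗ[ℝ] EuclideanSpace ℝ (Fin 4) where
  toFun x := (√2)⁻¹ • !₂[x 0 + x 3, x 1 - x 2, x 0 - x 3, x 1 + x 2]
  map_add' x y := by ext i; fin_cases i <;> simp <;> ring
  map_smul' c x := by ext i; fin_cases i <;> simp <;> ring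

theorem cliffordRotation_sq_add_sq_left (x : EuclideanSpace ℝ (Fin 4)) :
    cliffordRotation x 0 ^ 2 + cliffordRotation x 1 ^ 2 =
      ‖x‖ ^ 2 / 2 + (x 0 * x 3 - x 1 * x 2) := by
  simp only [cliffordRotation, LinearMap.coe_mk, AddHom.coe_mk, PiLp.smul_apply, Matrix.cons_val,
    smul_eq_mul, mul_pow, inv_pow, Nat.ofNat_nonneg, sq_sqrt, EuclideanSpace.real_norm_sq_eq,
    Fin.sum_univ_four]
  ring

theorem cliffordRotation_sq_add_sq_right (x : EuclideanSpace ℝ (Fin 4)) :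
    cliffordRotation x 2 ^ 2 + cliffordRotation x 3 ^ 2 =
      ‖x‖ ^ 2 / 2 - (x 0 * x 3 - x 1 * x 2) := by
  simp only [cliffordRotation, LinearMap.coe_mk, AddHom.coe_mk, PiLp.smul_apply, Matrix.cons_val,
    smul_eq_mul, mul_pow, inv_pow, Nat.ofNat_nonneg, sq_sqrt, EuclideanSpace.real_norm_sq_eq,
    Fin.sum_univ_four]
  ring

theorem norm_cliffordRotation (x : EuclideanSpace ℝ (Fin 4)) : ‖cliffordRotation x‖ = ‖x‖ := by
  have h := EuclideanSpace.real_norm_sq_eq (cliffordRotation x)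
  rw [Fin.sum_univ_four, add_assoc, cliffordRotation_sq_add_sq_right,
    cliffordRotation_sq_add_sq_left] at h
  exact (pow_left_inj₀ (norm_nonneg _) (norm_nonneg _) two_ne_zero).1 (by linarith)

noncomputable def cliffordIsometry : EuclideanSpace ℝ (Fin 4) ≃ₗᵢ[ℝ] EuclideanSpace ℝ (Fin 4) :=
  LinearIsometry.toLinearIsometryEquiv ⟨cliffordRotation, norm_cliffordRotation⟩ rfl

theorem cliffordRotation_mem_cliffordTorus_iff (x : EuclideanSpace ℝ (Fin 4)) :
    (‖cliffordRotation x‖ = 1 ∧ cliffordRotation x 0 ^ 2 + cliffordRotation x 1 ^ 2 = 1 / 2 ∧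
      cliffordRotation x 2 ^ 2 + cliffordRotation x 3 ^ 2 = 1 / 2) ↔
      ‖x‖ = 1 ∧ x 0 * x 3 - x 1 * x 2 = 0 := by
  rw [norm_cliffordRotation, cliffordRotation_sq_add_sq_left, cliffordRotation_sq_add_sq_right]
  constructor
  · rintro ⟨hx, hleft, -⟩
    rw [hx] at hleft
    exact ⟨hx, by linarith⟩
  · rintro ⟨hx, hdet⟩
    rw [hx, hdet]
    norm_num

/-- The Clifford torus is congruent to the zero-determinant set of `2 × 2` matrices
intersected with `S³`: some orthogonal transformation `A ∈ O(4)` of `ℝ⁴` maps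
`{x ∈ S³ : x₁x₄ − x₂x₃ = 0}` onto `{x ∈ S³ : x₁² + x₂² = 1/2 ∧ x₃² + x₄² = 1/2}`. -/
theorem cliffordTorus_congruent_det_zero :
    ∃ A : EuclideanSpace ℝ (Fin 4) ≃ₗᵢ[ℝ] EuclideanSpace ℝ (Fin 4),
      A '' {x : EuclideanSpace ℝ (Fin 4) | ‖x‖ = 1 ∧ x 0 * x 3 - x 1 * x 2 = 0} =
        {x : EuclideanSpace ℝ (Fin 4) | ‖x‖ = 1 ∧
          x 0 ^ 2 + x 1 ^ 2 = 1 / 2 ∧ x 2 ^ 2 + x 3 ^ 2 = 1 / 2} := by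
  refine ⟨cliffordIsometry, Set.ext fun y => ?_⟩
  have hy : cliffordRotation (cliffordIsometry.symm y) = y := cliffordIsometry.apply_symm_apply y
  rw [cliffordIsometry.image_eq_preimage_symm, Set.mem_preimage, Set.mem_ofPred_eq,
    ← cliffordRotation_mem_cliffordTorus_iff, hy, Set.mem_ofPred_eq]
end

section
/- The product S²(1/√2) × S²(1/√2) is congruent in S⁵ to the set of singular 4 × 4 skew-symmetric matrices of unit norm: there exists an orthogonal transformation A ∈ O(6) of ℝ⁶ mapping the set {x ∈ S⁵ : x₁x₆ − x₂x₅ + x₃x₄ = 0} onto the set {x ∈ S⁵ : x₁² + x₂² + x₃² = 1/2 and x₄² + x₅² + x₆² = 1/2}. -/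
/-!
Write `x = (u, v)` with `u, v ∈ ℝ³` and let `P (a, b, c) = (c, -b, a)`, so that the Pfaffian is
`⟨u, P v⟩`. Since `P` is symmetric and orthogonal, `A (u, v) = ((u + P v) / √2, (P u - v) / √2)`
is a symmetric orthogonal involution of `ℝ⁶`, and the squared norms of the two halves of `A x`
are `‖x‖² / 2 ± ⟨u, P v⟩`. On the unit sphere they are therefore both `1 / 2` exactly when the
Pfaffian of `x` vanishes, and `A`, being its own inverse, maps one set onto the other.
-/

open Real

local notation "ℝ⁶" => EuclideanSpace ℝ (Fin 6)

noncomputable def pfaffianFlipLinear : ℝ⁶ →ₗ[ℝ] ℝ⁶ where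
  toFun x := (√2)⁻¹ • !₂[x 0 + x 5, x 1 - x 4, x 2 + x 3, x 2 - x 3, -x 1 - x 4, x 0 - x 5]
  map_add' x y := by
    ext i
    fin_cases i <;>
      simp only [PiLp.add_apply, PiLp.smul_apply, smul_eq_mul, Fin.zero_eta, Fin.mk_one,
        Fin.reduceFinMk, Matrix.cons_val] <;>
      ring
  map_smul' c x := by
    ext i
    fin_cases i <;>
      simp only [PiLp.smul_apply, smul_eq_mul, RingHom.id_apply, Fin.zero_eta, Fin.mk_one,
        Fin.reduceFinMk, Matrix.cons_val] <;>
      ring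

lemma pfaffianFlipLinear_apply (x : ℝ⁶) (i : Fin 6) :
    pfaffianFlipLinear x i =
      (√2)⁻¹ * ![x 0 + x 5, x 1 - x 4, x 2 + x 3, x 2 - x 3, -x 1 - x 4, x 0 - x 5] i :=
  rfl

lemma inv_sqrt_two_sq : (√2)⁻¹ ^ 2 = (2 : ℝ)⁻¹ := by
  rw [inv_pow, sq_sqrt zero_le_two]

lemma pfaffianFlipLinear_involutive : Function.Involutive pfaffianFlipLinear := by
  intro x
  ext i
  have h : pfaffianFlipLinear (pfaffianFlipLinear x) i = ((√2)⁻¹ ^ 2 * 2) * x i := by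
    fin_cases i <;>
      simp only [pfaffianFlipLinear_apply, Fin.zero_eta, Fin.mk_one, Fin.reduceFinMk,
        Matrix.cons_val] <;>
      ring
  rw [h, inv_sqrt_two_sq, inv_mul_cancel₀ two_ne_zero, one_mul]

lemma norm_sq_eq_halves (x : ℝ⁶) :
    ‖x‖ ^ 2 = (x 0 ^ 2 + x 1 ^ 2 + x 2 ^ 2) + (x 3 ^ 2 + x 4 ^ 2 + x 5 ^ 2) := by
  rw [EuclideanSpace.real_norm_sq_eq, Fin.sum_univ_six]
  ring

lemma pfaffianFlipLinear_first_half (x : ℝ⁶) :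
    pfaffianFlipLinear x 0 ^ 2 + pfaffianFlipLinear x 1 ^ 2 + pfaffianFlipLinear x 2 ^ 2 =
      ‖x‖ ^ 2 / 2 + (x 0 * x 5 - x 1 * x 4 + x 2 * x 3) := by
  simp only [pfaffianFlipLinear_apply, Matrix.cons_val, norm_sq_eq_halves, mul_pow,
    inv_sqrt_two_sq]
  ring

lemma pfaffianFlipLinear_second_half (x : ℝ⁶) :
    pfaffianFlipLinear x 3 ^ 2 + pfaffianFlipLinear x 4 ^ 2 + pfaffianFlipLinear x 5 ^ 2 =
      ‖x‖ ^ 2 / 2 - (x 0 * x 5 - x 1 * x 4 + x 2 * x 3) := by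
  simp only [pfaffianFlipLinear_apply, Matrix.cons_val, norm_sq_eq_halves, mul_pow,
    inv_sqrt_two_sq]
  ring

lemma norm_pfaffianFlipLinear (x : ℝ⁶) : ‖pfaffianFlipLinear x‖ = ‖x‖ := by
  refine (sq_eq_sq₀ (norm_nonneg _) (norm_nonneg _)).1 ?_
  rw [norm_sq_eq_halves (pfaffianFlipLinear x), pfaffianFlipLinear_first_half,
    pfaffianFlipLinear_second_half]
  ring

noncomputable def pfaffianFlip : ℝ⁶ ≃ₗᵢ[ℝ] ℝ⁶ :=
  { LinearEquiv.ofInvolutive pfaffianFlipLinear pfaffianFlipLinear_involutive with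
    norm_map' := norm_pfaffianFlipLinear }

lemma coe_pfaffianFlip : ⇑pfaffianFlip = pfaffianFlipLinear := rfl

lemma pfaffianFlip_symm : pfaffianFlip.symm = pfaffianFlip := rfl

/-- `S²(1/√2) × S²(1/√2)` is congruent in `S⁵` to the set of singular `4 × 4`
skew-symmetric matrices of unit norm: some orthogonal transformation `A ∈ O(6)` of
`ℝ⁶` maps `{x ∈ S⁵ : x₁x₆ − x₂x₅ + x₃x₄ = 0}` onto
`{x ∈ S⁵ : x₁² + x₂² + x₃² = 1/2 ∧ x₄² + x₅² + x₆² = 1/2}`. -/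
theorem sphereProd_congruent_pfaffian_zero :
    ∃ A : EuclideanSpace ℝ (Fin 6) ≃ₗᵢ[ℝ] EuclideanSpace ℝ (Fin 6),
      A '' {x : EuclideanSpace ℝ (Fin 6) | ‖x‖ = 1 ∧
              x 0 * x 5 - x 1 * x 4 + x 2 * x 3 = 0} =
        {x : EuclideanSpace ℝ (Fin 6) | ‖x‖ = 1 ∧
          x 0 ^ 2 + x 1 ^ 2 + x 2 ^ 2 = 1 / 2 ∧ x 3 ^ 2 + x 4 ^ 2 + x 5 ^ 2 = 1 / 2} := by
  refine ⟨pfaffianFlip, ?_⟩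
  rw [LinearIsometryEquiv.image_eq_preimage_symm, pfaffianFlip_symm]
  ext y
  obtain ⟨x, rfl⟩ := pfaffianFlip.surjective y
  simp only [Set.mem_preimage, Set.mem_ofPred_eq, LinearIsometryEquiv.norm_map]
  rw [coe_pfaffianFlip, pfaffianFlipLinear_involutive x, pfaffianFlipLinear_first_half,
    pfaffianFlipLinear_second_half]
  constructor
  · rintro ⟨hn, hpf⟩
    simp only [hn, hpf]
    norm_num
  · rintro ⟨hn, h₁, -⟩
    rw [hn] at h₁
    exact ⟨hn, by linarith⟩
end
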